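/- arXiv:1502.05545 — 3 statements merged into one kernel-verified Lean document; each statement's English description precedes it below -/
import Mathlib

section
/- Consider an oblivious agent on the path v₁,…,vₙ (n ≥ 2) whose behavior at every degree-2 node is given by a single fixed sequence a : ℕ → Fin 2 (the j-th exit port on the j-th visit to any internal node), started at vₙ. Then there exists a port labeling of the path (an assignment, for each internal node, of which physical neighbor corresponds to port 1 and which to port 2) such that if the agent ever reaches v₁, it makes at least (n−1)² edge traversals before its first visit to v₁. -/
/-!
Orient every internal node `v` so that the port which the rule `a` uses least often among its
first `2v - 3` departures from `v` points toward `v₁`. Then `v` can send the agent left `v - 1`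
times only after having sent it right at least `v - 1` times.

When the agent, started at `vₙ`, stands at `v₁`, every edge `{v, v + 1}` has been crossed to
the left exactly once more than to the right. Climbing from `v₁`, this and the orientation show
inductively that the agent has left `v` toward `v - 1` at least `v - 1` times; so it has left
each internal `v` at least `2(v - 1)` times and `vₙ` at least `n - 1` times, which adds up to
`∑_{v=2}^{n-1} 2(v - 1) + (n - 1) = (n - 1)²` steps.
-/

/-- One step of the oblivious agent on the path `v₁, …, vₙ` (vertices `1, …, n`).
The state is `(current vertex, visit counts)`.  At an internal node `v` the agent,
on its `k`-th visit, exits via port `a k`, which the labeling `L` maps to a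
physical neighbor; at the endpoints it moves to the unique neighbor.  Visit counts
are updated on departure. -/
def pathStep (n : ℕ) (a : ℕ → Fin 2) (L : ℕ → Fin 2 → ℕ)
    (s : ℕ × (ℕ → ℕ)) : ℕ × (ℕ → ℕ) :=
  let v := s.1
  let c := s.2
  let v' := if v = 1 then 2 else if v = n then n - 1 else L v (a (c v + 1))
  (v', Function.update c v (c v + 1))

/-- The walk of the oblivious agent on the path, started at vertex `n` (= `vₙ`). -/
def pathWalk (n : ℕ) (a : ℕ → Fin 2) (L : ℕ → Fin 2 → ℕ) : ℕ → ℕ × (ℕ → ℕ)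
  | 0 => (n, fun _ => 0)
  | t + 1 => pathStep n a L (pathWalk n a L t)

/-- A valid port labeling: at every internal node the two ports are assigned
bijectively to the two physical neighbors. -/
def ValidLabeling (n : ℕ) (L : ℕ → Fin 2 → ℕ) : Prop :=
  ∀ v, 1 < v → v < n →
    (L v 0 = v - 1 ∧ L v 1 = v + 1) ∨ (L v 0 = v + 1 ∧ L v 1 = v - 1)

open Finset

theorem Nat.count_add_count_not (q : ℕ → Prop) [DecidablePred q] (n : ℕ) :
    Nat.count q n + Nat.count (fun k => ¬q k) n = n := by
  induction n with
  | zero => simp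
  | succ n ih => simp only [Nat.count_succ]; split_ifs <;> omega

theorem le_count_not_of_two_mul_count_le {q : ℕ → Prop} [DecidablePred q] {m k : ℕ}
    (hq : 2 * Nat.count q (2 * m - 1) ≤ 2 * m - 1) (h : m ≤ Nat.count q k) :
    m ≤ Nat.count (fun j => ¬q j) k := by
  rcases Nat.eq_zero_or_pos m with rfl | hm
  · exact Nat.zero_le _
  have hk : 2 * m - 1 ≤ k :=
    (Nat.lt_of_count_lt_count (by omega : Nat.count q (2 * m - 1) < Nat.count q k)).le
  have hsplit := Nat.count_add_count_not q (2 * m - 1)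
  have hmono := Nat.count_monotone (fun j => ¬q j) hk
  omega

def UnitSteps (p : ℕ → ℕ) : Prop :=
  ∀ s, p (s + 1) = p s + 1 ∨ p (s + 1) + 1 = p s

def crossings (p : ℕ → ℕ) (v u t : ℕ) : ℕ :=
  Nat.count (fun s => p s = v ∧ p (s + 1) = u) t

section UnitStepWalk

variable {p : ℕ → ℕ}

theorem crossings_balance (hp : UnitSteps p) (v t : ℕ) :
    crossings p (v + 1) v t + (if v < p t then 1 else 0) =
      crossings p v (v + 1) t + (if v < p 0 then 1 else 0) := by
  induction t with
  | zero => simp [crossings]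
  | succ t ih =>
    simp only [crossings, Nat.count_succ] at ih ⊢
    rcases hp t with h | h <;> split_ifs at ih ⊢ <;> omega

theorem count_eq_crossings_add_crossings (hp : UnitSteps p) {w : ℕ} (hw : 1 ≤ w) (t : ℕ) :
    Nat.count (p · = w) t = crossings p w (w - 1) t + crossings p w (w + 1) t := by
  induction t with
  | zero => simp [crossings]
  | succ t ih =>
    simp only [crossings, Nat.count_succ] at ih ⊢
    rcases hp t with h | h <;> split_ifs at ih ⊢ <;> omega

theorem sum_count_eq_le (p : ℕ → ℕ) (S : Finset ℕ) (t : ℕ) :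
    ∑ w ∈ S, Nat.count (p · = w) t ≤ t := by
  induction t with
  | zero => simp
  | succ t ih =>
    simp only [Nat.count_succ, sum_add_distrib, sum_ite_eq]
    split_ifs <;> omega

theorem mul_succ_le_sum_Icc {f : ℕ → ℕ} (m : ℕ) (hf : ∀ w ∈ Icc 2 (m + 1), 2 * (w - 1) ≤ f w) :
    m * (m + 1) ≤ ∑ w ∈ Icc 2 (m + 1), f w := by
  induction m with
  | zero => simp
  | succ m ih =>
    rw [sum_Icc_succ_top (by omega)]
    have hlast := hf (m + 2) (by simp)
    have hrest := ih fun w hw => hf w (by simp at hw ⊢; omega)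
    rw [show m + 2 - 1 = m + 1 by omega] at hlast
    nlinarith

theorem sq_le_sum_Icc {f : ℕ → ℕ} {n : ℕ} (hn : 2 ≤ n)
    (hint : ∀ w, 2 ≤ w → w < n → 2 * (w - 1) ≤ f w) (hend : n - 1 ≤ f n) :
    (n - 1) ^ 2 ≤ ∑ w ∈ Icc 2 n, f w := by
  obtain ⟨m, rfl⟩ : ∃ m, n = m + 2 := ⟨n - 2, by omega⟩
  rw [sum_Icc_succ_top (by omega)]
  have hrest := mul_succ_le_sum_Icc (f := f) m fun w hw => by
    rw [mem_Icc] at hw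
    exact hint w hw.1 (by omega)
  rw [show m + 2 - 1 = m + 1 by omega] at hend ⊢
  nlinarith

theorem sub_one_le_crossings_sub_one (hp : UnitSteps p) {n t : ℕ} (hn : 2 ≤ n) (h0 : p 0 = n)
    (ht : p t = 1)
    (hright : ∀ w, 2 ≤ w → w < n → w - 1 ≤ crossings p w (w - 1) t →
      w - 1 ≤ crossings p w (w + 1) t) {w : ℕ} (hw : 2 ≤ w) (hwn : w ≤ n) :
    w - 1 ≤ crossings p w (w - 1) t := by
  have hedge : ∀ v, 1 ≤ v → v < n → crossings p (v + 1) v t = crossings p v (v + 1) t + 1 := by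
    intro v hv hvn
    have := crossings_balance hp v t
    rw [ht, h0, if_neg (by omega), if_pos hvn] at this
    omega
  induction w, hw using Nat.le_induction with
  | base =>
    have := hedge 1 le_rfl (by omega)
    show 1 ≤ crossings p (1 + 1) 1 t
    omega
  | succ w hw ih =>
    have := hright w hw (by omega) (ih (by omega))
    have := hedge w (by omega) (by omega)
    simp only [Nat.add_sub_cancel]
    omega

theorem sq_le_of_le_crossings_add_one (hp : UnitSteps p) {n t : ℕ} (hn : 2 ≤ n) (h0 : p 0 = n)
    (ht : p t = 1)
    (hright : ∀ w, 2 ≤ w → w < n → w - 1 ≤ crossings p w (w - 1) t →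
      w - 1 ≤ crossings p w (w + 1) t) :
    (n - 1) ^ 2 ≤ t := by
  have hleft := fun w hw hwn => sub_one_le_crossings_sub_one hp hn h0 ht hright (w := w) hw hwn
  have hvisits := fun w (hw : 2 ≤ w) => count_eq_crossings_add_crossings hp (by omega : 1 ≤ w) t
  calc (n - 1) ^ 2 ≤ ∑ w ∈ Icc 2 n, Nat.count (p · = w) t := by
        refine sq_le_sum_Icc hn (fun w hw hwn => ?_) ?_
        · have := hright w hw hwn (hleft w hw hwn.le)
          have := hleft w hw hwn.le
          have := hvisits w hw
          omega
        · have := hleft n hn le_rfl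
          have := hvisits n hn
          omega
    _ ≤ t := sum_count_eq_le p _ t

end UnitStepWalk

section PathAgent

variable {n : ℕ} {a : ℕ → Fin 2} {L : ℕ → Fin 2 → ℕ}

/-- The target of the `(j + 1)`-st departure from `w`; `a` is indexed from `1`. -/
def pathExit (n : ℕ) (a : ℕ → Fin 2) (L : ℕ → Fin 2 → ℕ) (w j : ℕ) : ℕ :=
  if w = 1 then 2 else if w = n then n - 1 else L w (a (j + 1))

theorem pathWalk_succ (t : ℕ) :
    pathWalk n a L (t + 1) =
      (pathExit n a L (pathWalk n a L t).1 ((pathWalk n a L t).2 (pathWalk n a L t).1),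
        Function.update (pathWalk n a L t).2 (pathWalk n a L t).1
          ((pathWalk n a L t).2 (pathWalk n a L t).1 + 1)) :=
  rfl

theorem crossings_pathWalk (w u t : ℕ) :
    crossings (fun s => (pathWalk n a L s).1) w u t =
      Nat.count (fun j => pathExit n a L w j = u) ((pathWalk n a L t).2 w) := by
  induction t with
  | zero => exact Nat.count_zero _
  | succ t ih =>
    rw [crossings, Nat.count_succ, ← crossings, ih, pathWalk_succ]
    by_cases hw : (pathWalk n a L t).1 = w
    · subst hw
      simp [Nat.count_succ]
    · simp [hw, Function.update_of_ne (Ne.symm hw)]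

theorem pathExit_mem (hn : 2 ≤ n) (hL : ValidLabeling n L) {w : ℕ} (hw : 1 ≤ w) (hwn : w ≤ n)
    (j : ℕ) :
    1 ≤ pathExit n a L w j ∧ pathExit n a L w j ≤ n ∧
      (pathExit n a L w j = w + 1 ∨ pathExit n a L w j + 1 = w) := by
  unfold pathExit
  split_ifs with hw1 hwn'
  · omega
  · omega
  · generalize a (j + 1) = i
    rcases hL w (by omega) (by omega) with ⟨hl0, hl1⟩ | ⟨hl0, hl1⟩ <;> fin_cases i <;>
      simp only [Fin.zero_eta, Fin.mk_one, hl0, hl1, true_or, and_true] <;> omega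

theorem pathWalk_fst_mem (hn : 2 ≤ n) (hL : ValidLabeling n L) (t : ℕ) :
    1 ≤ (pathWalk n a L t).1 ∧ (pathWalk n a L t).1 ≤ n := by
  induction t with
  | zero => exact ⟨by change 1 ≤ n; omega, le_rfl⟩
  | succ t ih =>
    rw [pathWalk_succ]
    exact ⟨(pathExit_mem hn hL ih.1 ih.2 _).1, (pathExit_mem hn hL ih.1 ih.2 _).2.1⟩

theorem unitSteps_pathWalk (hn : 2 ≤ n) (hL : ValidLabeling n L) :
    UnitSteps (fun s => (pathWalk n a L s).1) := fun t => by
  have ⟨h1, hn'⟩ := pathWalk_fst_mem (a := a) hn hL t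
  exact (pathExit_mem hn hL h1 hn' _).2.2

end PathAgent

def minority (f : ℕ → Fin 2) (N : ℕ) : Fin 2 :=
  if 2 * Nat.count (f · = 0) N ≤ N then 0 else 1

theorem two_mul_count_minority_le (f : ℕ → Fin 2) (N : ℕ) :
    2 * Nat.count (f · = minority f N) N ≤ N := by
  unfold minority
  split_ifs with h
  · exact h
  · have hsplit := Nat.count_add_count_not (f · = 0) N
    have hone : Nat.count (f · = 1) N = Nat.count (fun k => ¬f k = 0) N := by
      congr 1
      ext k
      exact ⟨fun hk => hk ▸ one_ne_zero, Fin.eq_one_of_ne_zero _⟩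
    omega

def adversaryLabeling (a : ℕ → Fin 2) (v : ℕ) (i : Fin 2) : ℕ :=
  if i = minority (fun j => a (j + 1)) (2 * v - 3) then v - 1 else v + 1

theorem validLabeling_adversaryLabeling (a : ℕ → Fin 2) (n : ℕ) :
    ValidLabeling n (adversaryLabeling a) := by
  intro v _ _
  unfold adversaryLabeling
  rcases Fin.exists_fin_two.mp ⟨minority (fun j => a (j + 1)) (2 * v - 3), rfl⟩ with h | h <;>
    simp [h]

theorem adversaryLabeling_eq_sub_one_iff (a : ℕ → Fin 2) {v : ℕ} (hv : 1 ≤ v) (i : Fin 2) :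
    adversaryLabeling a v i = v - 1 ↔ i = minority (fun j => a (j + 1)) (2 * v - 3) := by
  unfold adversaryLabeling
  split_ifs with h
  · simp [h]
  · simp only [h, iff_false]
    omega

theorem adversaryLabeling_eq_add_one_iff (a : ℕ → Fin 2) (v : ℕ) (i : Fin 2) :
    adversaryLabeling a v i = v + 1 ↔ ¬i = minority (fun j => a (j + 1)) (2 * v - 3) := by
  unfold adversaryLabeling
  split_ifs with h <;> simp [h]

theorem le_crossings_add_one_adversaryLabeling {n : ℕ} (a : ℕ → Fin 2) {w t : ℕ} (hw : 2 ≤ w)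
    (hwn : w < n)
    (hleft : w - 1 ≤ crossings (fun s => (pathWalk n a (adversaryLabeling a) s).1) w (w - 1) t) :
    w - 1 ≤ crossings (fun s => (pathWalk n a (adversaryLabeling a) s).1) w (w + 1) t := by
  simp only [crossings_pathWalk, pathExit, if_neg (by omega : w ≠ 1), if_neg hwn.ne,
    adversaryLabeling_eq_sub_one_iff a (by omega : 1 ≤ w),
    adversaryLabeling_eq_add_one_iff a w] at hleft ⊢
  refine le_count_not_of_two_mul_count_le ?_ hleft
  rw [show 2 * (w - 1) - 1 = 2 * w - 3 by omega]
  exact two_mul_count_minority_le _ _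

/-- For any oblivious agent on the path `v₁, …, vₙ` (given by its per-node exit
sequence `a`), started at `vₙ`, there is a port labeling such that if the agent
ever reaches `v₁` it has made at least `(n-1)²` edge traversals before that first
visit: any time `t` at which the agent is at `v₁` satisfies `(n-1)² ≤ t`. -/
theorem path_lower_bound (n : ℕ) (hn : 2 ≤ n) (a : ℕ → Fin 2) :
    ∃ L : ℕ → Fin 2 → ℕ, ValidLabeling n L ∧
      ∀ t, (pathWalk n a L t).1 = 1 → (n - 1) ^ 2 ≤ t := by
  have hL := validLabeling_adversaryLabeling a n
  refine ⟨adversaryLabeling a, hL, fun t ht => ?_⟩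
  exact sq_le_of_le_crossings_add_one (unitSteps_pathWalk hn hL) hn rfl ht
    fun w hw hwn => le_crossings_add_one_adversaryLabeling a hw hwn
end

section
/- In the setting of the previous theorem (oblivious agent on the path v₁,…,vₙ with per-node visit sequence a : ℕ → Fin 2, started at vₙ), there exists a port labeling such that if the agent ever reaches v₁, the agent traverses the arc vₙ → v_{n−1} at least n−1 times before its first visit to v₁. -/
/-!
Orient the ports from `v₂` upward. Suppose that before first reaching `v₁` the agent must
traverse `v → v - 1` exactly `j` times (`j = 1` for `v = v₂`). The last departure from `v` is
one of these, so the number `m` of departures from `v` is the position of the `j`-th occurrence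
of the down port of `v` in `a`. Making the down port the minority bit of `a 1, …, a (2j - 1)`
forces `m ≥ 2j`, i.e. at least `j` departures upward. Crossings of the edge `{v, v + 1}`
alternate and start downward from `vₙ`, so `v + 1 → v` is traversed `m - j + 1 ≥ j + 1` times;
this number depends on `a` alone, which is what lets the orientation of `v + 1` be chosen next.
-/

/-- The number of `k ∈ [1, m]` with `a k = b`: the `k`-th departure from a node reads `a k`. -/
def bitCount (a : ℕ → Fin 2) (b : Fin 2) (m : ℕ) : ℕ :=
  Nat.count (fun k => a (k + 1) = b) m

/-- The position of the `j`-th occurrence of `b` among `a 1, a 2, …`, for `j ≥ 1`. -/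
noncomputable def nthOcc (a : ℕ → Fin 2) (b : Fin 2) (j : ℕ) : ℕ :=
  Nat.nth (fun k => a (k + 1) = b) (j - 1) + 1

def minorityBit (a : ℕ → Fin 2) (m : ℕ) : Fin 2 :=
  if 2 * bitCount a 0 m ≤ m then 0 else 1

section BitCount

variable (a : ℕ → Fin 2)

theorem bitCount_succ (b : Fin 2) (m : ℕ) :
    bitCount a b (m + 1) = bitCount a b m + if a (m + 1) = b then 1 else 0 :=
  Nat.count_succ _ m

theorem bitCount_zero_add_bitCount_one (m : ℕ) : bitCount a 0 m + bitCount a 1 m = m := by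
  induction m with
  | zero => rfl
  | succ m ih =>
    rw [bitCount_succ, bitCount_succ]
    rcases Fin.exists_fin_two.mp ⟨a (m + 1), rfl⟩ with h | h <;> simp [h] <;> omega

theorem two_mul_bitCount_minorityBit_le (m : ℕ) : 2 * bitCount a (minorityBit a m) m ≤ m := by
  have := bitCount_zero_add_bitCount_one a m
  unfold minorityBit
  split_ifs <;> omega

theorem nthOcc_bitCount {b : Fin 2} {m : ℕ} (hm : 1 ≤ m) (hb : a m = b) :
    nthOcc a b (bitCount a b m) = m := by
  obtain ⟨k, rfl⟩ : ∃ k, m = k + 1 := ⟨m - 1, by omega⟩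
  have hk : a (k + 1) = b := hb
  rw [nthOcc, bitCount_succ, if_pos hk, Nat.add_sub_cancel]
  exact congrArg (· + 1) (Nat.nth_count (p := fun k => a (k + 1) = b) hk)

end BitCount

theorem ValidLabeling.eq_sub_one_or_eq_add_one {n : ℕ} {L : ℕ → Fin 2 → ℕ}
    (hL : ValidLabeling n L) {v : ℕ} (h1 : 1 < v) (hn : v < n) (p : Fin 2) :
    L v p = v - 1 ∨ L v p = v + 1 := by
  rcases hL v h1 hn with h | h <;> rcases Fin.exists_fin_two.mp ⟨p, rfl⟩ with rfl | rfl <;>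
    simp [h]

theorem ValidLabeling.eq_sub_one_iff {n : ℕ} {L : ℕ → Fin 2 → ℕ}
    (hL : ValidLabeling n L) {v : ℕ} (h1 : 1 < v) (hn : v < n) {b : Fin 2}
    (hb : L v b = v - 1) (p : Fin 2) : L v p = v - 1 ↔ p = b := by
  rcases hL v h1 hn with h | h <;> rcases Fin.exists_fin_two.mp ⟨p, rfl⟩ with rfl | rfl <;>
    rcases Fin.exists_fin_two.mp ⟨b, rfl⟩ with rfl | rfl <;> simp_all <;> omega

section Walk

variable {n : ℕ} (a : ℕ → Fin 2) {L : ℕ → Fin 2 → ℕ}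

local notation "W" => pathWalk n a L

theorem pathWalk_fst_succ (t : ℕ) : (W (t + 1)).1 =
    if (W t).1 = 1 then 2 else if (W t).1 = n then n - 1 else L (W t).1 (a ((W t).2 (W t).1 + 1)) :=
  rfl

theorem pathWalk_snd_succ (t v : ℕ) :
    (W (t + 1)).2 v = (W t).2 v + if (W t).1 = v then 1 else 0 := by
  simp only [pathWalk, pathStep, Function.update_apply]
  split_ifs <;> simp_all

theorem pathWalk_fst_succ_eq_sub_one_iff (hL : ValidLabeling n L) {v : ℕ} (hv1 : 1 < v)
    (hvn : v < n) {b : Fin 2} (hb : L v b = v - 1) {t : ℕ} (ht : (W t).1 = v) :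
    (W (t + 1)).1 = v - 1 ↔ a ((W t).2 v + 1) = b := by
  rw [pathWalk_fst_succ, if_neg (by omega), if_neg (by omega), ht]
  exact hL.eq_sub_one_iff hv1 hvn hb _

variable (hn : 2 ≤ n) (hL : ValidLabeling n L)
include hn hL

theorem pathWalk_fst_mem_s7 (t : ℕ) : 1 ≤ (W t).1 ∧ (W t).1 ≤ n := by
  induction t with
  | zero => exact ⟨by simp only [pathWalk]; omega, le_rfl⟩
  | succ t ih =>
    rw [pathWalk_fst_succ]
    generalize a ((W t).2 (W t).1 + 1) = p
    split_ifs with h1 hn'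
    · omega
    · omega
    · have := hL.eq_sub_one_or_eq_add_one (v := (W t).1) (by omega) (by omega) p
      omega

theorem pathWalk_fst_succ_adj (t : ℕ) :
    (W (t + 1)).1 + 1 = (W t).1 ∨ (W (t + 1)).1 = (W t).1 + 1 := by
  have := pathWalk_fst_mem_s7 a hn hL t
  rw [pathWalk_fst_succ]
  generalize a ((W t).2 (W t).1 + 1) = p
  split_ifs with h1 hn'
  · omega
  · omega
  · have := hL.eq_sub_one_or_eq_add_one (v := (W t).1) (by omega) (by omega) p
    omega

theorem pathWalk_visit_bit_eq_of_lt {v : ℕ} (hv1 : 1 < v) (hvn : v < n) {b : Fin 2}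
    (hb : L v b = v - 1) {t : ℕ} (hc : 1 ≤ (W t).2 v) (ht : (W t).1 < v) :
    a ((W t).2 v) = b := by
  -- the last port read at `v` points to the side of `v` the agent is on
  suffices ∀ t, 1 ≤ (W t).2 v →
      ((W t).1 < v → a ((W t).2 v) = b) ∧ (v < (W t).1 → a ((W t).2 v) ≠ b) from
    (this t hc).1 ht
  intro t
  induction t with
  | zero => intro h; simp [pathWalk] at h
  | succ t ih =>
    have hadj := pathWalk_fst_succ_adj a hn hL t
    rw [pathWalk_snd_succ]
    by_cases ht : (W t).1 = v
    · have hdown := pathWalk_fst_succ_eq_sub_one_iff a hL hv1 hvn hb ht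
      simp only [ht, if_true]
      refine fun _ => ⟨fun h => hdown.1 (by omega), fun h h' => ?_⟩
      have := hdown.2 h'
      omega
    · simp only [ht, if_false, add_zero]
      exact fun hc => ⟨fun h => (ih hc).1 (by omega), fun h => (ih hc).2 (by omega)⟩

end Walk

def arcCount (n : ℕ) (a : ℕ → Fin 2) (L : ℕ → Fin 2 → ℕ) (u w T : ℕ) : ℕ :=
  Nat.count (fun t => (pathWalk n a L t).1 = u ∧ (pathWalk n a L (t + 1)).1 = w) T

section ArcCount

variable {n : ℕ} (a : ℕ → Fin 2) {L : ℕ → Fin 2 → ℕ}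

local notation "W" => pathWalk n a L

theorem arcCount_succ (u w t : ℕ) : arcCount n a L u w (t + 1) =
    arcCount n a L u w t + if (W t).1 = u ∧ (W (t + 1)).1 = w then 1 else 0 :=
  Nat.count_succ _ t

theorem arcCount_sub_one_add_arcCount_add_one (hn : 2 ≤ n) (hL : ValidLabeling n L) (v t : ℕ) :
    arcCount n a L v (v - 1) t + arcCount n a L v (v + 1) t = (W t).2 v := by
  induction t with
  | zero => rfl
  | succ t ih =>
    have := pathWalk_fst_succ_adj a hn hL t
    rw [arcCount_succ, arcCount_succ, pathWalk_snd_succ]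
    split_ifs <;> omega

/-- Crossings of the edge `{u, u + 1}` alternate, starting downward from `vₙ`. -/
theorem arcCount_add_one_eq (hn : 2 ≤ n) (hL : ValidLabeling n L) {u : ℕ} (hu : u < n)
    (t : ℕ) :
    arcCount n a L (u + 1) u t = arcCount n a L u (u + 1) t + if (W t).1 ≤ u then 1 else 0 := by
  induction t with
  | zero => simp [arcCount, not_le.2 hu, show (W 0).1 = n from rfl]
  | succ t ih =>
    have := pathWalk_fst_succ_adj a hn hL t
    rw [arcCount_succ, arcCount_succ]
    split_ifs at ih ⊢ <;> omega

theorem arcCount_sub_one_eq_bitCount (hL : ValidLabeling n L) {v : ℕ} (hv1 : 1 < v) (hvn : v < n)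
    {b : Fin 2} (hb : L v b = v - 1) (t : ℕ) :
    arcCount n a L v (v - 1) t = bitCount a b ((W t).2 v) := by
  induction t with
  | zero => rfl
  | succ t ih =>
    rw [arcCount_succ, pathWalk_snd_succ, ih]
    by_cases ht : (W t).1 = v
    · simp only [ht, true_and, if_true, bitCount_succ,
        pathWalk_fst_succ_eq_sub_one_iff a hL hv1 hvn hb ht]
    · simp [ht]

theorem arcCount_add_one_eq_nthOcc (hn : 2 ≤ n) (hL : ValidLabeling n L) {v : ℕ} (hv1 : 1 < v)
    (hvn : v < n) {b : Fin 2} (hb : L v b = v - 1) {T : ℕ} (hT : (W T).1 < v)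
    (hj : 1 ≤ arcCount n a L v (v - 1) T) :
    nthOcc a b (arcCount n a L v (v - 1) T) = (W T).2 v ∧
      arcCount n a L (v + 1) v T = (W T).2 v - arcCount n a L v (v - 1) T + 1 := by
  have hbit := arcCount_sub_one_eq_bitCount a hL hv1 hvn hb T
  have hm : 1 ≤ (W T).2 v := by
    by_contra h
    rw [Nat.lt_one_iff.mp (not_le.mp h), bitCount, Nat.count_zero] at hbit
    omega
  have hlast := pathWalk_visit_bit_eq_of_lt a hn hL hv1 hvn hb hm hT
  refine ⟨hbit ▸ nthOcc_bitCount a hm hlast, ?_⟩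
  have hcross := arcCount_add_one_eq a hn hL hvn T
  have hdep := arcCount_sub_one_add_arcCount_add_one a hn hL v T
  rw [if_pos hT.le] at hcross
  omega

end ArcCount

def portLabeling (β : ℕ → Fin 2) (v : ℕ) (p : Fin 2) : ℕ :=
  if p = β v then v - 1 else v + 1

theorem validLabeling_portLabeling (n : ℕ) (β : ℕ → Fin 2) :
    ValidLabeling n (portLabeling β) := by
  intro v _ _
  rcases Fin.exists_fin_two.mp ⟨β v, rfl⟩ with h | h <;> simp [portLabeling, h]

/-- The number of traversals of `v_{i+2} → v_{i+1}` before the first visit to `v₁`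
under `portLabeling (downBit a)`. -/
noncomputable def demand (a : ℕ → Fin 2) : ℕ → ℕ
  | 0 => 1
  | i + 1 => nthOcc a (minorityBit a (2 * demand a i - 1)) (demand a i) - demand a i + 1

noncomputable def downBit (a : ℕ → Fin 2) (v : ℕ) : Fin 2 :=
  minorityBit a (2 * demand a (v - 2) - 1)

section Forcing

variable {n : ℕ} (a : ℕ → Fin 2)

local notation "W" => pathWalk n a (portLabeling (downBit a))

theorem arcCount_eq_demand (hn : 2 ≤ n) {T : ℕ} (hT : (W T).1 = 1)
    (hfirst : ∀ t < T, (W t).1 ≠ 1) (i : ℕ) (hi : i + 2 ≤ n) :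
    arcCount n a (portLabeling (downBit a)) (i + 2) (i + 1) T = demand a i ∧
      i + 1 ≤ demand a i := by
  have hL := validLabeling_portLabeling n (downBit a)
  induction i with
  | zero =>
    have hcross := arcCount_add_one_eq a hn hL (u := 1) (by omega) T
    have hnone : arcCount n a (portLabeling (downBit a)) 1 2 T = 0 :=
      Nat.count_iff_forall_not.mpr fun t ht h => hfirst t ht h.1
    rw [if_pos hT.le, hnone] at hcross
    exact ⟨hcross, le_rfl⟩
  | succ i ih =>
    obtain ⟨hj, hij⟩ := ih (by omega)
    set b := downBit a (i + 2)
    have hb : portLabeling (downBit a) (i + 2) b = i + 2 - 1 := if_pos rfl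
    have hj' : arcCount n a _ (i + 2) (i + 2 - 1) T = demand a i := hj
    obtain ⟨hocc, hnext⟩ := arcCount_add_one_eq_nthOcc a hn hL (by omega) (by omega) hb (T := T)
      (by omega) (by rw [hj']; omega)
    have hbit := arcCount_sub_one_eq_bitCount a hL (v := i + 2) (by omega) (by omega) hb T
    rw [hj'] at hocc hnext hbit
    have hmin : 2 * bitCount a b (2 * demand a i - 1) ≤ 2 * demand a i - 1 :=
      two_mul_bitCount_minorityBit_le a _
    have hlt : 2 * demand a i - 1 < (W T).2 (i + 2) :=
      Nat.lt_of_count_lt_count (p := fun k => a (k + 1) = b) (by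
        rw [← bitCount, ← bitCount, ← hbit]; omega)
    have hdemand : demand a (i + 1) = (W T).2 (i + 2) - demand a i + 1 := by
      rw [demand, ← hocc]; rfl
    exact ⟨hnext.trans hdemand.symm, by omega⟩

end Forcing

/-- For any oblivious agent on the path `v₁, …, vₙ` started at `vₙ`, there is a
port labeling such that if the agent first reaches `v₁` at time `T`, then before
time `T` it has traversed the arc `vₙ → v_{n-1}` at least `n - 1` times. -/
theorem path_lower_bound_endpoint_arc (n : ℕ) (hn : 2 ≤ n) (a : ℕ → Fin 2) :
    ∃ L : ℕ → Fin 2 → ℕ, ValidLabeling n L ∧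
      ∀ T, (pathWalk n a L T).1 = 1 → (∀ t < T, (pathWalk n a L t).1 ≠ 1) →
        n - 1 ≤ ((Finset.range T).filter (fun t =>
          (pathWalk n a L t).1 = n ∧ (pathWalk n a L (t + 1)).1 = n - 1)).card := by
  refine ⟨portLabeling (downBit a), validLabeling_portLabeling n _, fun T hT hfirst => ?_⟩
  obtain ⟨hcount, hdemand⟩ := arcCount_eq_demand a hn hT hfirst (n - 2) (by omega)
  rw [show n - 2 + 2 = n by omega, show n - 2 + 1 = n - 1 by omega] at hcount
  rw [← Nat.count_eq_card_filter_range]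
  change n - 1 ≤ arcCount n a _ n (n - 1) T
  omega
end

section
/- (Inductive step of the path lower bound.) Suppose a : ℕ → Fin 2 is the visit sequence of an oblivious agent and i ≥ 2. If for the subpath v₁,…,v_i started at v_i there is a labeling forcing at least (i−1)² traversals before first visiting v₁ and at least i−1 traversals of the arc v_i → v_{i−1}, and if α ∈ Fin 2 occurs at least i−1 times among a(1),…,a(2(i−1)−1), then labeling the arc v_i → v_{i+1} with port α forces: before the agent's (i−1)-st traversal of v_i → v_{i−1}, it traverses v_i → v_{i+1} at least i−1 times. -/
/-- Inductive step of the path lower bound, stated in terms of the agent's exit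
sequence `a` at the node `v_i` (on its `k`-th visit it exits via port `a k`; port
`α` is assigned to the arc `v_i → v_{i+1}`, the other port to `v_i → v_{i-1}`).
If `α` occurs at least `i - 1` times among `a 1, …, a (2(i-1) - 1)`, then before
the `(i-1)`-st traversal of the arc `v_i → v_{i-1}` (i.e. before the `(i-1)`-st
occurrence of the other port, at some visit `m`), the arc `v_i → v_{i+1}` has
been traversed at least `i - 1` times. -/
theorem path_inductive_step (a : ℕ → Fin 2) (i : ℕ) (hi : 2 ≤ i) (α : Fin 2)
    (hα : i - 1 ≤ ((Finset.Icc 1 (2 * (i - 1) - 1)).filter (fun k => a k = α)).card) :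
    ∀ m : ℕ, ((Finset.Icc 1 m).filter (fun k => a k ≠ α)).card = i - 1 →
      i - 1 ≤ ((Finset.Icc 1 (m - 1)).filter (fun k => a k = α)).card := by
  intro m hm
  set n := i - 1 with hn
  have hn1 : 1 ≤ n := by omega
  set N := 2 * n - 1 with hN
  -- split counts on Icc 1 N
  have hsplit : ((Finset.Icc 1 N).filter (fun k => a k = α)).card
      + ((Finset.Icc 1 N).filter (fun k => a k ≠ α)).card = N := by
    rw [Finset.card_filter_add_card_filter_not, Nat.card_Icc]; omega
  have hnonN : ((Finset.Icc 1 N).filter (fun k => a k ≠ α)).card ≤ n - 1 := by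
    have hcard : ((Finset.Icc 1 N).filter (fun k => a k = α)).card
        ≤ (Finset.Icc 1 N).card := Finset.card_filter_le _ _
    rw [Nat.card_Icc] at hcard
    omega
  -- m > N
  have hmN : N < m := by
    by_contra h
    push_neg at h
    have hsub : Finset.Icc 1 m ⊆ Finset.Icc 1 N := Finset.Icc_subset_Icc_right h
    have := Finset.card_le_card (Finset.filter_subset_filter
      (fun k => a k ≠ α) hsub)
    omega
  have hsub : Finset.Icc 1 N ⊆ Finset.Icc 1 (m - 1) :=
    Finset.Icc_subset_Icc_right (by omega)
  have := Finset.card_le_card (Finset.filter_subset_filter (fun k => a k = α) hsub)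
  omega
end
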